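/- arXiv:2109.07556 — 11 statements merged into one kernel-verified Lean document; each statement's English description precedes it below -/
import Mathlib

section
/- Let (Ω, 𝓕, μ) be a probability space with measurable events A, B, T, O satisfying the consistency identities O ∩ T = A ∩ T and O ∩ Tᶜ = B ∩ Tᶜ. Then μ(A ∩ Bᶜ) ≥ max{0, μ(A) − μ(B), μ(O) − μ(B), μ(A) − μ(O)}. -/
open MeasureTheory Set

private lemma sub_le_diff {Ω : Type*} [MeasurableSpace Ω] (μ : Measure Ω)
    [IsProbabilityMeasure μ] (X Y : Set Ω) :
    (μ X).toReal - (μ Y).toReal ≤ (μ (X ∩ Yᶜ)).toReal := by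
  have h : μ X ≤ μ (X ∩ Yᶜ) + μ Y := by
    calc μ X ≤ μ ((X ∩ Yᶜ) ∪ Y) := measure_mono (fun x hx => by
          by_cases hy : x ∈ Y
          · exact Or.inr hy
          · exact Or.inl ⟨hx, hy⟩)
    _ ≤ μ (X ∩ Yᶜ) + μ Y := measure_union_le _ _
  have h1 : (μ X).toReal ≤ (μ (X ∩ Yᶜ)).toReal + (μ Y).toReal := by
    rw [← ENNReal.toReal_add (measure_ne_top μ _) (measure_ne_top μ _)]
    exact ENNReal.toReal_mono (by finiteness) h
  linarith

private lemma toReal_mono' {Ω : Type*} [MeasurableSpace Ω] (μ : Measure Ω)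
    [IsProbabilityMeasure μ] {X Y : Set Ω} (h : X ⊆ Y) :
    (μ X).toReal ≤ (μ Y).toReal :=
  ENNReal.toReal_mono (measure_ne_top μ _) (measure_mono h)

/-- Li–Pearl lower bound on the PNS `μ(A ∩ Bᶜ)` under consistency. -/
theorem pns_lower_bound {Ω : Type*} [MeasurableSpace Ω] (μ : Measure Ω)
    [IsProbabilityMeasure μ] {A B T O : Set Ω}
    (hA : MeasurableSet A) (hB : MeasurableSet B)
    (hT : MeasurableSet T) (hO : MeasurableSet O)
    (hcons1 : O ∩ T = A ∩ T) (hcons2 : O ∩ Tᶜ = B ∩ Tᶜ) :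
    max 0 (max ((μ A).toReal - (μ B).toReal)
      (max ((μ O).toReal - (μ B).toReal) ((μ A).toReal - (μ O).toReal)))
      ≤ (μ (A ∩ Bᶜ)).toReal := by
  have sub1 : O ∩ Bᶜ ⊆ A ∩ Bᶜ := by
    intro x ⟨hxO, hxB⟩
    by_cases ht : x ∈ T
    · have : x ∈ A ∩ T := hcons1 ▸ ⟨hxO, ht⟩
      exact ⟨this.1, hxB⟩
    · have : x ∈ B ∩ Tᶜ := hcons2 ▸ ⟨hxO, ht⟩
      exact absurd this.1 hxB
  have sub2 : A ∩ Oᶜ ⊆ A ∩ Bᶜ := by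
    intro x ⟨hxA, hxO⟩
    refine ⟨hxA, fun hxB => hxO ?_⟩
    by_cases ht : x ∈ T
    · exact ((Set.ext_iff.mp hcons1 x).mpr ⟨hxA, ht⟩).1
    · exact ((Set.ext_iff.mp hcons2 x).mpr ⟨hxB, ht⟩).1
  refine max_le ENNReal.toReal_nonneg (max_le (sub_le_diff μ A B) (max_le ?_ ?_))
  · exact (sub_le_diff μ O B).trans (toReal_mono' μ sub1)
  · exact (sub_le_diff μ A O).trans (toReal_mono' μ sub2)
end

section
/- Let (Ω, 𝓕, μ) be a probability space with measurable events A, B, T, O satisfying the consistency identities O ∩ T = A ∩ T and O ∩ Tᶜ = B ∩ Tᶜ. Then μ(A ∩ Bᶜ) ≤ min{μ(A), μ(Bᶜ), μ(O ∩ T) + μ(Oᶜ ∩ Tᶜ), μ(A) − μ(B) + μ(O ∩ Tᶜ) + μ(Oᶜ ∩ T)}. -/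
open MeasureTheory Set

/-- Li–Pearl upper bound on the PNS `μ(A ∩ Bᶜ)` under consistency. -/
theorem pns_upper_bound {Ω : Type*} [MeasurableSpace Ω] (μ : Measure Ω)
    [IsProbabilityMeasure μ] {A B T O : Set Ω}
    (hA : MeasurableSet A) (hB : MeasurableSet B)
    (hT : MeasurableSet T) (hO : MeasurableSet O)
    (hcons1 : O ∩ T = A ∩ T) (hcons2 : O ∩ Tᶜ = B ∩ Tᶜ) :
    (μ (A ∩ Bᶜ)).toReal ≤
      min ((μ A).toReal) (min ((μ Bᶜ).toReal)
        (min ((μ (O ∩ T)).toReal + (μ (Oᶜ ∩ Tᶜ)).toReal)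
          ((μ A).toReal - (μ B).toReal + (μ (O ∩ Tᶜ)).toReal + (μ (Oᶜ ∩ T)).toReal))) := by
  have hfin : ∀ s : Set Ω, μ s ≠ ⊤ := fun s => measure_ne_top μ s
  -- bound 1
  have h1 : (μ (A ∩ Bᶜ)).toReal ≤ (μ A).toReal :=
    ENNReal.toReal_mono (hfin A) (measure_mono inter_subset_left)
  -- bound 2
  have h2 : (μ (A ∩ Bᶜ)).toReal ≤ (μ Bᶜ).toReal :=
    ENNReal.toReal_mono (hfin Bᶜ) (measure_mono inter_subset_right)
  -- bound 3
  have hsub3 : A ∩ Bᶜ ⊆ (O ∩ T) ∪ (Oᶜ ∩ Tᶜ) := by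
    rintro x ⟨hxA, hxB⟩
    by_cases hxT : x ∈ T
    · left
      rw [hcons1]; exact ⟨hxA, hxT⟩
    · right
      refine ⟨fun hxO => hxB ?_, hxT⟩
      have : x ∈ B ∩ Tᶜ := hcons2 ▸ (⟨hxO, hxT⟩ : x ∈ O ∩ Tᶜ)
      exact this.1
  have h3' : μ (A ∩ Bᶜ) ≤ μ (O ∩ T) + μ (Oᶜ ∩ Tᶜ) :=
    le_trans (measure_mono hsub3) (measure_union_le _ _)
  have h3 : (μ (A ∩ Bᶜ)).toReal ≤ (μ (O ∩ T)).toReal + (μ (Oᶜ ∩ Tᶜ)).toReal := by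
    rw [← ENNReal.toReal_add (hfin _) (hfin _)]
    exact ENNReal.toReal_mono (ENNReal.add_ne_top.2 ⟨hfin _, hfin _⟩) h3'
  -- bound 4
  have hsub4 : Aᶜ ∩ B ⊆ (O ∩ Tᶜ) ∪ (Oᶜ ∩ T) := by
    rintro x ⟨hxA, hxB⟩
    by_cases hxT : x ∈ T
    · right
      refine ⟨fun hxO => hxA ?_, hxT⟩
      have : x ∈ A ∩ T := hcons1 ▸ (⟨hxO, hxT⟩ : x ∈ O ∩ T)
      exact this.1
    · left
      rw [hcons2]; exact ⟨hxB, hxT⟩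
  have h4' : μ (Aᶜ ∩ B) ≤ μ (O ∩ Tᶜ) + μ (Oᶜ ∩ T) :=
    le_trans (measure_mono hsub4) (measure_union_le _ _)
  have h4'' : (μ (Aᶜ ∩ B)).toReal ≤ (μ (O ∩ Tᶜ)).toReal + (μ (Oᶜ ∩ T)).toReal := by
    rw [← ENNReal.toReal_add (hfin _) (hfin _)]
    exact ENNReal.toReal_mono (ENNReal.add_ne_top.2 ⟨hfin _, hfin _⟩) h4'
  -- splittings
  have hA_split : μ (A ∩ B) + μ (A ∩ Bᶜ) = μ A := by
    have := measure_inter_add_diff (μ := μ) A hB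
    rwa [diff_eq] at this
  have hB_split : μ (B ∩ A) + μ (B ∩ Aᶜ) = μ B := by
    have := measure_inter_add_diff (μ := μ) B hA
    rwa [diff_eq] at this
  have hAr : (μ (A ∩ B)).toReal + (μ (A ∩ Bᶜ)).toReal = (μ A).toReal := by
    rw [← ENNReal.toReal_add (hfin _) (hfin _), hA_split]
  have hBr : (μ (A ∩ B)).toReal + (μ (Aᶜ ∩ B)).toReal = (μ B).toReal := by
    rw [← ENNReal.toReal_add (hfin _) (hfin _), inter_comm A B, inter_comm Aᶜ B, hB_split]
  have h4 : (μ (A ∩ Bᶜ)).toReal ≤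
      (μ A).toReal - (μ B).toReal + (μ (O ∩ Tᶜ)).toReal + (μ (Oᶜ ∩ T)).toReal := by
    linarith
  exact le_min h1 (le_min h2 (le_min h3 h4))
end

section
/- Let (Ω, 𝓕, μ) be a probability space with measurable events A, B, T, O satisfying the consistency identities O ∩ T = A ∩ T and O ∩ Tᶜ = B ∩ Tᶜ, and let (G_z)_{z ∈ ι} be a countable measurable partition of Ω. Then μ(A ∩ Bᶜ) ≥ Σ_{z ∈ ι} max{0, μ(A ∩ G_z) − μ(B ∩ G_z), μ(O ∩ G_z) − μ(B ∩ G_z), μ(A ∩ G_z) − μ(O ∩ G_z)}. -/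
open MeasureTheory Set

/-- Covariate lower bound on the PNS `μ(A ∩ Bᶜ)`: summing the Li–Pearl lower
bound over the cells of a countable measurable partition. -/
theorem pns_lower_bound_covariates {Ω : Type*} [MeasurableSpace Ω] (μ : Measure Ω)
    [IsProbabilityMeasure μ] {A B T O : Set Ω}
    (hA : MeasurableSet A) (hB : MeasurableSet B)
    (hT : MeasurableSet T) (hO : MeasurableSet O)
    (hcons1 : O ∩ T = A ∩ T) (hcons2 : O ∩ Tᶜ = B ∩ Tᶜ)
    {ι : Type*} [Countable ι] (G : ι → Set Ω)
    (hG : ∀ z, MeasurableSet (G z))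
    (hGdisj : Pairwise (Function.onFun Disjoint G))
    (hGcover : ⋃ z, G z = univ) :
    (∑' z, max 0 (max ((μ (A ∩ G z)).toReal - (μ (B ∩ G z)).toReal)
      (max ((μ (O ∩ G z)).toReal - (μ (B ∩ G z)).toReal)
        ((μ (A ∩ G z)).toReal - (μ (O ∩ G z)).toReal))))
      ≤ (μ (A ∩ Bᶜ)).toReal := by
  -- A ∩ B ⊆ O via consistency
  have hABO : A ∩ B ⊆ O := by
    intro ω ⟨ha, hb⟩
    by_cases ht : ω ∈ T
    · exact (hcons1.symm.subset ⟨ha, ht⟩).1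
    · exact (hcons2.symm.subset ⟨hb, ht⟩).1
  -- O ∩ Bᶜ ⊆ A via consistency
  have hOBcA : O ∩ Bᶜ ⊆ A := by
    intro ω ⟨ho, hb⟩
    by_cases ht : ω ∈ T
    · exact (hcons1.subset ⟨ho, ht⟩).1
    · exact absurd (hcons2.subset ⟨ho, ht⟩).1 hb
  set g : ι → ℝ := fun z => (μ (A ∩ Bᶜ ∩ G z)).toReal with hgdef
  have hdisj : Pairwise (Function.onFun Disjoint fun z => A ∩ Bᶜ ∩ G z) := fun i j hij =>
    (hGdisj hij).mono inter_subset_right inter_subset_right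
  have hmeas : ∀ z, MeasurableSet (A ∩ Bᶜ ∩ G z) := fun z =>
    (hA.inter hB.compl).inter (hG z)
  have hsum : ∑' z, μ (A ∩ Bᶜ ∩ G z) = μ (A ∩ Bᶜ) := by
    rw [← measure_iUnion hdisj hmeas, ← inter_iUnion, hGcover, inter_univ]
  have hgsum : Summable g := by
    apply ENNReal.summable_toReal
    rw [hsum]; exact measure_ne_top μ _
  have hterm : ∀ z, max 0 (max ((μ (A ∩ G z)).toReal - (μ (B ∩ G z)).toReal)
      (max ((μ (O ∩ G z)).toReal - (μ (B ∩ G z)).toReal)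
        ((μ (A ∩ G z)).toReal - (μ (O ∩ G z)).toReal))) ≤ g z := by
    intro z
    have key : ∀ X Y : Set Ω, μ X ≤ μ (A ∩ Bᶜ ∩ G z) + μ Y →
        (μ X).toReal - (μ Y).toReal ≤ g z := by
      intro X Y h
      have h2 := ENNReal.toReal_mono
        (by exact ENNReal.add_ne_top.2 ⟨measure_ne_top μ _, measure_ne_top μ _⟩) h
      rw [ENNReal.toReal_add (measure_ne_top μ _) (measure_ne_top μ _)] at h2
      simp only [hgdef]
      linarith
    have h1 : μ (A ∩ G z) ≤ μ (A ∩ Bᶜ ∩ G z) + μ (B ∩ G z) := by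
      refine le_trans (measure_mono ?_) (measure_union_le _ _)
      intro ω ⟨ha, hgz⟩
      by_cases hb : ω ∈ B
      · exact Or.inr ⟨hb, hgz⟩
      · exact Or.inl ⟨⟨ha, hb⟩, hgz⟩
    have h2 : μ (O ∩ G z) ≤ μ (A ∩ Bᶜ ∩ G z) + μ (B ∩ G z) := by
      refine le_trans (measure_mono ?_) (measure_union_le _ _)
      intro ω ⟨ho, hgz⟩
      by_cases hb : ω ∈ B
      · exact Or.inr ⟨hb, hgz⟩
      · exact Or.inl ⟨⟨hOBcA ⟨ho, hb⟩, hb⟩, hgz⟩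
    have h3 : μ (A ∩ G z) ≤ μ (A ∩ Bᶜ ∩ G z) + μ (O ∩ G z) := by
      refine le_trans (measure_mono ?_) (measure_union_le _ _)
      intro ω ⟨ha, hgz⟩
      by_cases hb : ω ∈ B
      · exact Or.inr ⟨hABO ⟨ha, hb⟩, hgz⟩
      · exact Or.inl ⟨⟨ha, hb⟩, hgz⟩
    have h0 : (0 : ℝ) ≤ g z := ENNReal.toReal_nonneg
    simp only [max_le_iff]
    exact ⟨h0, key _ _ h1, key _ _ h2, key _ _ h3⟩
  have hnonneg : ∀ z, (0 : ℝ) ≤ max 0 (max ((μ (A ∩ G z)).toReal - (μ (B ∩ G z)).toReal)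
      (max ((μ (O ∩ G z)).toReal - (μ (B ∩ G z)).toReal)
        ((μ (A ∩ G z)).toReal - (μ (O ∩ G z)).toReal))) := fun z => le_max_left _ _
  calc (∑' z, max 0 (max ((μ (A ∩ G z)).toReal - (μ (B ∩ G z)).toReal)
      (max ((μ (O ∩ G z)).toReal - (μ (B ∩ G z)).toReal)
        ((μ (A ∩ G z)).toReal - (μ (O ∩ G z)).toReal))))
      ≤ ∑' z, g z :=
        Summable.tsum_le_tsum hterm (Summable.of_nonneg_of_le hnonneg hterm hgsum) hgsum
    _ = (μ (A ∩ Bᶜ)).toReal := by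
        rw [hgdef, ← ENNReal.tsum_toReal_eq (fun z => measure_ne_top μ _), hsum]
end

section
/- Let (Ω, 𝓕, μ) be a probability space with measurable events A, B, T, O satisfying the consistency identities O ∩ T = A ∩ T and O ∩ Tᶜ = B ∩ Tᶜ, and let (G_z)_{z ∈ ι} be a countable measurable partition of Ω. Then μ(A ∩ Bᶜ) ≤ Σ_{z ∈ ι} min{μ(A ∩ G_z), μ(Bᶜ ∩ G_z), μ(O ∩ T ∩ G_z) + μ(Oᶜ ∩ Tᶜ ∩ G_z), μ(A ∩ G_z) − μ(B ∩ G_z) + μ(O ∩ Tᶜ ∩ G_z) + μ(Oᶜ ∩ T ∩ G_z)}. -/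
open MeasureTheory Set

/-- Covariate upper bound on the PNS `μ(A ∩ Bᶜ)`: summing the Li–Pearl upper
bound over the cells of a countable measurable partition. -/
theorem pns_upper_bound_covariates {Ω : Type*} [MeasurableSpace Ω] (μ : Measure Ω)
    [IsProbabilityMeasure μ] {A B T O : Set Ω}
    (hA : MeasurableSet A) (hB : MeasurableSet B)
    (hT : MeasurableSet T) (hO : MeasurableSet O)
    (hcons1 : O ∩ T = A ∩ T) (hcons2 : O ∩ Tᶜ = B ∩ Tᶜ)
    {ι : Type*} [Countable ι] (G : ι → Set Ω)
    (hG : ∀ z, MeasurableSet (G z))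
    (hGdisj : Pairwise (Function.onFun Disjoint G))
    (hGcover : ⋃ z, G z = univ) :
    (μ (A ∩ Bᶜ)).toReal ≤
      ∑' z, min ((μ (A ∩ G z)).toReal) (min ((μ (Bᶜ ∩ G z)).toReal)
        (min ((μ (O ∩ T ∩ G z)).toReal + (μ (Oᶜ ∩ Tᶜ ∩ G z)).toReal)
          ((μ (A ∩ G z)).toReal - (μ (B ∩ G z)).toReal
            + (μ (O ∩ Tᶜ ∩ G z)).toReal + (μ (Oᶜ ∩ T ∩ G z)).toReal))) := by
  classical
  have hfin : ∀ s : Set Ω, μ s ≠ ⊤ := fun s => measure_ne_top μ s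
  -- complement-consistency identities
  have hc1 : Oᶜ ∩ T = Aᶜ ∩ T := by
    ext ω
    have h := Set.ext_iff.mp hcons1 ω
    simp only [mem_inter_iff, mem_compl_iff] at *
    tauto
  have hc2 : Oᶜ ∩ Tᶜ = Bᶜ ∩ Tᶜ := by
    ext ω
    have h := Set.ext_iff.mp hcons2 ω
    simp only [mem_inter_iff, mem_compl_iff] at *
    tauto
  set f : ι → ℝ := fun z => (μ (A ∩ Bᶜ ∩ G z)).toReal with hf
  set m : ι → ℝ := fun z => min ((μ (A ∩ G z)).toReal) (min ((μ (Bᶜ ∩ G z)).toReal)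
        (min ((μ (O ∩ T ∩ G z)).toReal + (μ (Oᶜ ∩ Tᶜ ∩ G z)).toReal)
          ((μ (A ∩ G z)).toReal - (μ (B ∩ G z)).toReal
            + (μ (O ∩ Tᶜ ∩ G z)).toReal + (μ (Oᶜ ∩ T ∩ G z)).toReal))) with hm
  -- helper : real measure of union
  have hunionR : ∀ s t : Set Ω, (μ (s ∪ t)).toReal ≤ (μ s).toReal + (μ t).toReal := by
    intro s t
    rw [← ENNReal.toReal_add (hfin s) (hfin t)]
    exact ENNReal.toReal_mono (by simp [ENNReal.add_ne_top, hfin s, hfin t])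
      (measure_union_le s t)
  -- per-cell bound 1
  have hle1 : ∀ z, f z ≤ (μ (A ∩ G z)).toReal := fun z =>
    ENNReal.toReal_mono (hfin _) (measure_mono fun ω h => ⟨h.1.1, h.2⟩)
  -- per-cell bound 2
  have hle2 : ∀ z, f z ≤ (μ (Bᶜ ∩ G z)).toReal := fun z =>
    ENNReal.toReal_mono (hfin _) (measure_mono fun ω h => ⟨h.1.2, h.2⟩)
  -- per-cell bound 3
  have hle3 : ∀ z, f z ≤ (μ (O ∩ T ∩ G z)).toReal + (μ (Oᶜ ∩ Tᶜ ∩ G z)).toReal := by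
    intro z
    have hsub : A ∩ Bᶜ ∩ G z ⊆ (O ∩ T ∩ G z) ∪ (Oᶜ ∩ Tᶜ ∩ G z) := by
      intro ω hω
      by_cases hTω : ω ∈ T
      · left
        have h1 : ω ∈ A ∩ T := ⟨hω.1.1, hTω⟩
        rw [← hcons1] at h1
        exact ⟨⟨h1.1, hTω⟩, hω.2⟩
      · right
        have h1 : ω ∈ Bᶜ ∩ Tᶜ := ⟨hω.1.2, hTω⟩
        rw [← hc2] at h1
        exact ⟨⟨h1.1, hTω⟩, hω.2⟩
    exact le_trans (ENNReal.toReal_mono (hfin _) (measure_mono hsub)) (hunionR _ _)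
  -- per-cell bound 4
  have hle4 : ∀ z, f z ≤ (μ (A ∩ G z)).toReal - (μ (B ∩ G z)).toReal
      + (μ (O ∩ Tᶜ ∩ G z)).toReal + (μ (Oᶜ ∩ T ∩ G z)).toReal := by
    intro z
    set g := G z with hg
    have e1 : μ (A ∩ B ∩ g) + μ (A ∩ Bᶜ ∩ g) = μ (A ∩ g) := by
      have h := measure_inter_add_diff (μ := μ) (A ∩ g) hB
      have hs1 : A ∩ g ∩ B = A ∩ B ∩ g := by ext ω; simp only [mem_inter_iff]; tauto
      have hs2 : (A ∩ g) \ B = A ∩ Bᶜ ∩ g := by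
        ext ω; simp only [mem_diff, mem_inter_iff, mem_compl_iff]; tauto
      rw [hs1, hs2] at h; exact h
    have e2 : μ (A ∩ B ∩ g) + μ (Aᶜ ∩ B ∩ g) = μ (B ∩ g) := by
      have h := measure_inter_add_diff (μ := μ) (B ∩ g) hA
      have hs1 : B ∩ g ∩ A = A ∩ B ∩ g := by ext ω; simp only [mem_inter_iff]; tauto
      have hs2 : (B ∩ g) \ A = Aᶜ ∩ B ∩ g := by
        ext ω; simp only [mem_diff, mem_inter_iff, mem_compl_iff]; tauto
      rw [hs1, hs2] at h; exact h
    have e3 : (μ (Aᶜ ∩ B ∩ g)).toReal ≤ (μ (O ∩ Tᶜ ∩ g)).toReal + (μ (Oᶜ ∩ T ∩ g)).toReal := by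
      have hsub : Aᶜ ∩ B ∩ g ⊆ (O ∩ Tᶜ ∩ g) ∪ (Oᶜ ∩ T ∩ g) := by
        intro ω hω
        by_cases hTω : ω ∈ T
        · right
          have h1 : ω ∈ Aᶜ ∩ T := ⟨hω.1.1, hTω⟩
          rw [← hc1] at h1
          exact ⟨⟨h1.1, hTω⟩, hω.2⟩
        · left
          have h1 : ω ∈ B ∩ Tᶜ := ⟨hω.1.2, hTω⟩
          rw [← hcons2] at h1
          exact ⟨⟨h1.1, hTω⟩, hω.2⟩
      exact le_trans (ENNReal.toReal_mono (hfin _) (measure_mono hsub)) (hunionR _ _)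
    have e1R : (μ (A ∩ B ∩ g)).toReal + (μ (A ∩ Bᶜ ∩ g)).toReal = (μ (A ∩ g)).toReal := by
      rw [← ENNReal.toReal_add (hfin _) (hfin _), e1]
    have e2R : (μ (A ∩ B ∩ g)).toReal + (μ (Aᶜ ∩ B ∩ g)).toReal = (μ (B ∩ g)).toReal := by
      rw [← ENNReal.toReal_add (hfin _) (hfin _), e2]
    show (μ (A ∩ Bᶜ ∩ g)).toReal ≤ _
    linarith
  -- f z ≤ m z
  have hfm : ∀ z, f z ≤ m z := fun z =>
    le_min (hle1 z) (le_min (hle2 z) (le_min (hle3 z) (hle4 z)))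
  -- decomposition of μ (A ∩ Bᶜ) over the partition
  have hdecomp : μ (A ∩ Bᶜ) = ∑' z, μ (A ∩ Bᶜ ∩ G z) := by
    have hU : A ∩ Bᶜ = ⋃ z, A ∩ Bᶜ ∩ G z := by
      rw [← inter_iUnion, hGcover, inter_univ]
    conv_lhs => rw [hU]
    exact measure_iUnion
      (fun i j hij => ((hGdisj hij).mono inter_subset_right inter_subset_right))
      (fun z => (hA.inter hB.compl).inter (hG z))
  have hdecompR : (μ (A ∩ Bᶜ)).toReal = ∑' z, f z := by
    rw [hdecomp, ENNReal.tsum_toReal_eq (fun z => hfin _)]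
  -- summability
  have hsumA : Summable (fun z => (μ (A ∩ G z)).toReal) := by
    apply ENNReal.summable_toReal
    have hU : (⋃ z, A ∩ G z) = A := by rw [← inter_iUnion, hGcover, inter_univ]
    rw [← measure_iUnion
      (fun i j hij => ((hGdisj hij).mono inter_subset_right inter_subset_right))
      (fun z => hA.inter (hG z)), hU]
    exact hfin A
  have hf0 : ∀ z, 0 ≤ f z := fun z => ENNReal.toReal_nonneg
  have hmsummable : Summable m := by
    apply Summable.of_nonneg_of_le (fun z => le_trans (hf0 z) (hfm z))
      (fun z => min_le_left _ _) hsumA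
  have hfsummable : Summable f := by
    apply ENNReal.summable_toReal
    rw [← hdecomp]; exact hfin _
  rw [hdecompR]
  exact Summable.tsum_le_tsum hfm hfsummable hmsummable
end

section
/- Let (Ω, 𝓕, μ) be a probability space with measurable events A, B, O, and let (G_z)_{z ∈ ι} be a countable measurable partition of Ω. Then the covariate lower bound L₁ = Σ_{z ∈ ι} max{0, μ(A ∩ G_z) − μ(B ∩ G_z), μ(O ∩ G_z) − μ(B ∩ G_z), μ(A ∩ G_z) − μ(O ∩ G_z)} satisfies L₁ ≥ max{0, μ(A) − μ(B), μ(O) − μ(B), μ(A) − μ(O)}; that is, the covariate lower bound is never worse than the Li-Pearl lower bound. -/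
open MeasureTheory Set

lemma decomp_aux {Ω : Type*} [MeasurableSpace Ω] (μ : Measure Ω)
    [IsProbabilityMeasure μ] {A : Set Ω} (hA : MeasurableSet A)
    {ι : Type*} [Countable ι] (G : ι → Set Ω)
    (hG : ∀ z, MeasurableSet (G z))
    (hGdisj : Pairwise (Function.onFun Disjoint G))
    (hGcover : ⋃ z, G z = univ) :
    (μ A).toReal = ∑' z, (μ (A ∩ G z)).toReal ∧
      Summable (fun z => (μ (A ∩ G z)).toReal) := by
  have hU : μ A = ∑' z, μ (A ∩ G z) := by
    rw [← measure_iUnion (fun i j hij => (hGdisj hij).mono (inter_subset_right)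
      (inter_subset_right)) (fun z => hA.inter (hG z))]
    rw [← inter_iUnion, hGcover, inter_univ]
  have hne : ∑' z, μ (A ∩ G z) ≠ ⊤ := by
    rw [← hU]; exact measure_ne_top μ A
  constructor
  · rw [hU, ENNReal.tsum_toReal_eq (fun z => measure_ne_top μ _)]
  · exact ENNReal.summable_toReal hne

/-- The covariate lower bound is never worse than the Li–Pearl lower bound. -/
theorem covariate_lower_bound_ge {Ω : Type*} [MeasurableSpace Ω] (μ : Measure Ω)
    [IsProbabilityMeasure μ] {A B O : Set Ω}
    (hA : MeasurableSet A) (hB : MeasurableSet B) (hO : MeasurableSet O)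
    {ι : Type*} [Countable ι] (G : ι → Set Ω)
    (hG : ∀ z, MeasurableSet (G z))
    (hGdisj : Pairwise (Function.onFun Disjoint G))
    (hGcover : ⋃ z, G z = univ) :
    max 0 (max ((μ A).toReal - (μ B).toReal)
      (max ((μ O).toReal - (μ B).toReal) ((μ A).toReal - (μ O).toReal)))
      ≤ ∑' z, max 0 (max ((μ (A ∩ G z)).toReal - (μ (B ∩ G z)).toReal)
          (max ((μ (O ∩ G z)).toReal - (μ (B ∩ G z)).toReal)
            ((μ (A ∩ G z)).toReal - (μ (O ∩ G z)).toReal))) := by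
  obtain ⟨hAeq, hAsum⟩ := decomp_aux μ hA G hG hGdisj hGcover
  obtain ⟨hBeq, hBsum⟩ := decomp_aux μ hB G hG hGdisj hGcover
  obtain ⟨hOeq, hOsum⟩ := decomp_aux μ hO G hG hGdisj hGcover
  set f : ι → ℝ := fun z => max 0 (max ((μ (A ∩ G z)).toReal - (μ (B ∩ G z)).toReal)
          (max ((μ (O ∩ G z)).toReal - (μ (B ∩ G z)).toReal)
            ((μ (A ∩ G z)).toReal - (μ (O ∩ G z)).toReal))) with hf
  have hfsum : Summable f := by
    apply Summable.of_nonneg_of_le (fun z => le_max_left _ _)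
      (fun z => ?_) (hAsum.add hOsum)
    have h1 : (0:ℝ) ≤ (μ (B ∩ G z)).toReal := ENNReal.toReal_nonneg
    have h2 : (0:ℝ) ≤ (μ (O ∩ G z)).toReal := ENNReal.toReal_nonneg
    have h3 : (0:ℝ) ≤ (μ (A ∩ G z)).toReal := ENNReal.toReal_nonneg
    simp only [hf, max_le_iff]
    refine ⟨by positivity, by linarith, by linarith, by linarith⟩
  have hfnn : ∀ z, 0 ≤ f z := fun z => le_max_left _ _
  have h0 : (0:ℝ) ≤ ∑' z, f z := tsum_nonneg hfnn
  have hAB : (μ A).toReal - (μ B).toReal ≤ ∑' z, f z := by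
    rw [hAeq, hBeq, ← Summable.tsum_sub hAsum hBsum]
    exact Summable.tsum_le_tsum (fun z => le_trans (le_max_left _ _)
      (le_max_right 0 _)) (hAsum.sub hBsum) hfsum
  have hOB : (μ O).toReal - (μ B).toReal ≤ ∑' z, f z := by
    rw [hOeq, hBeq, ← Summable.tsum_sub hOsum hBsum]
    exact Summable.tsum_le_tsum (fun z => le_trans (le_trans (le_max_left _ _)
      (le_max_right _ _)) (le_max_right 0 _)) (hOsum.sub hBsum) hfsum
  have hAO : (μ A).toReal - (μ O).toReal ≤ ∑' z, f z := by
    rw [hAeq, hOeq, ← Summable.tsum_sub hAsum hOsum]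
    exact Summable.tsum_le_tsum (fun z => le_trans (le_trans (le_max_right _ _)
      (le_max_right _ _)) (le_max_right 0 _)) (hAsum.sub hOsum) hfsum
  simp only [max_le_iff]
  exact ⟨h0, hAB, hOB, hAO⟩
end

section
/- Let (Ω, 𝓕, μ) be a probability space with measurable events A, B, T, O, and let (G_z)_{z ∈ ι} be a countable measurable partition of Ω. Then the covariate upper bound U₁ = Σ_{z ∈ ι} min{μ(A ∩ G_z), μ(Bᶜ ∩ G_z), μ(O ∩ T ∩ G_z) + μ(Oᶜ ∩ Tᶜ ∩ G_z), μ(A ∩ G_z) − μ(B ∩ G_z) + μ(O ∩ Tᶜ ∩ G_z) + μ(Oᶜ ∩ T ∩ G_z)} satisfies U₁ ≤ min{μ(A), μ(Bᶜ), μ(O ∩ T) + μ(Oᶜ ∩ Tᶜ), μ(A) − μ(B) + μ(O ∩ Tᶜ) + μ(Oᶜ ∩ T)}; that is, the covariate upper bound is never worse than the Li-Pearl upper bound. -/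
open MeasureTheory Set

private lemma summable_min {ι : Type*} {f g : ι → ℝ} (hf : Summable f) (hg : Summable g) :
    Summable (fun z => min (f z) (g z)) := by
  have h : (fun z => min (f z) (g z)) = fun z => ((f z + g z) - |f z - g z|) / 2 := by
    funext z
    rcases le_total (f z) (g z) with h | h
    · rw [min_eq_left h, abs_of_nonpos (by linarith)]; ring
    · rw [min_eq_right h, abs_of_nonneg (by linarith)]; ring
  rw [h]
  exact ((hf.add hg).sub ((hf.sub hg).abs)).div_const 2

/-- The covariate upper bound is never worse than the Li–Pearl upper bound. -/
theorem covariate_upper_bound_le {Ω : Type*} [MeasurableSpace Ω] (μ : Measure Ω)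
    [IsProbabilityMeasure μ] {A B T O : Set Ω}
    (hA : MeasurableSet A) (hB : MeasurableSet B)
    (hT : MeasurableSet T) (hO : MeasurableSet O)
    {ι : Type*} [Countable ι] (G : ι → Set Ω)
    (hG : ∀ z, MeasurableSet (G z))
    (hGdisj : Pairwise (Function.onFun Disjoint G))
    (hGcover : ⋃ z, G z = univ) :
    (∑' z, min ((μ (A ∩ G z)).toReal) (min ((μ (Bᶜ ∩ G z)).toReal)
        (min ((μ (O ∩ T ∩ G z)).toReal + (μ (Oᶜ ∩ Tᶜ ∩ G z)).toReal)
          ((μ (A ∩ G z)).toReal - (μ (B ∩ G z)).toReal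
            + (μ (O ∩ Tᶜ ∩ G z)).toReal + (μ (Oᶜ ∩ T ∩ G z)).toReal))))
      ≤ min ((μ A).toReal) (min ((μ Bᶜ).toReal)
          (min ((μ (O ∩ T)).toReal + (μ (Oᶜ ∩ Tᶜ)).toReal)
            ((μ A).toReal - (μ B).toReal + (μ (O ∩ Tᶜ)).toReal + (μ (Oᶜ ∩ T)).toReal))) := by
  have key : ∀ S : Set Ω, MeasurableSet S → (∑' z, μ (S ∩ G z)) = μ S := by
    intro S hS
    rw [← measure_iUnion
      (fun i j hij => (hGdisj hij).mono inter_subset_right inter_subset_right)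
      (fun z => hS.inter (hG z))]
    rw [← inter_iUnion, hGcover, inter_univ]
  have key' : ∀ S : Set Ω, MeasurableSet S →
      (∑' z, (μ (S ∩ G z)).toReal) = (μ S).toReal := by
    intro S hS
    rw [← ENNReal.tsum_toReal_eq (fun z => measure_ne_top μ _), key S hS]
  have hsumm : ∀ S : Set Ω, Summable (fun z => (μ (S ∩ G z)).toReal) := by
    intro S
    apply ENNReal.summable_toReal
    refine ne_top_of_le_ne_top ?_ (ENNReal.tsum_le_tsum
      (fun z => measure_mono inter_subset_right))
    rw [← measure_iUnion hGdisj hG]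
    exact measure_ne_top μ _
  -- component summabilities
  have s1 := hsumm A
  have s2 := hsumm Bᶜ
  have s3 := (hsumm (O ∩ T)).add (hsumm (Oᶜ ∩ Tᶜ))
  have s4 := (((hsumm A).sub (hsumm B)).add (hsumm (O ∩ Tᶜ))).add (hsumm (Oᶜ ∩ T))
  have smin4 : Summable (fun z => min ((μ (O ∩ T ∩ G z)).toReal + (μ (Oᶜ ∩ Tᶜ ∩ G z)).toReal)
      ((μ (A ∩ G z)).toReal - (μ (B ∩ G z)).toReal
        + (μ (O ∩ Tᶜ ∩ G z)).toReal + (μ (Oᶜ ∩ T ∩ G z)).toReal)) := summable_min s3 s4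
  have smin2 : Summable (fun z => min ((μ (Bᶜ ∩ G z)).toReal)
      (min ((μ (O ∩ T ∩ G z)).toReal + (μ (Oᶜ ∩ Tᶜ ∩ G z)).toReal)
        ((μ (A ∩ G z)).toReal - (μ (B ∩ G z)).toReal
          + (μ (O ∩ Tᶜ ∩ G z)).toReal + (μ (Oᶜ ∩ T ∩ G z)).toReal))) := summable_min s2 smin4
  have smin : Summable (fun z => min ((μ (A ∩ G z)).toReal) (min ((μ (Bᶜ ∩ G z)).toReal)
      (min ((μ (O ∩ T ∩ G z)).toReal + (μ (Oᶜ ∩ Tᶜ ∩ G z)).toReal)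
        ((μ (A ∩ G z)).toReal - (μ (B ∩ G z)).toReal
          + (μ (O ∩ Tᶜ ∩ G z)).toReal + (μ (Oᶜ ∩ T ∩ G z)).toReal)))) := summable_min s1 smin2
  refine le_min ?_ (le_min ?_ (le_min ?_ ?_))
  · calc _ ≤ ∑' z, (μ (A ∩ G z)).toReal :=
        Summable.tsum_le_tsum (fun z => min_le_left _ _) smin s1
      _ = (μ A).toReal := key' A hA
  · calc _ ≤ ∑' z, (μ (Bᶜ ∩ G z)).toReal :=
        Summable.tsum_le_tsum (fun z => (min_le_right _ _).trans (min_le_left _ _)) smin s2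
      _ = (μ Bᶜ).toReal := key' Bᶜ hB.compl
  · calc _ ≤ ∑' z, ((μ (O ∩ T ∩ G z)).toReal + (μ (Oᶜ ∩ Tᶜ ∩ G z)).toReal) :=
        Summable.tsum_le_tsum (fun z => (min_le_right _ _).trans
          ((min_le_right _ _).trans (min_le_left _ _))) smin s3
      _ = _ := by
        rw [Summable.tsum_add (hsumm (O ∩ T)) (hsumm (Oᶜ ∩ Tᶜ)), key' (O ∩ T) (hO.inter hT),
          key' (Oᶜ ∩ Tᶜ) (hO.compl.inter hT.compl)]
  · calc _ ≤ ∑' z, ((μ (A ∩ G z)).toReal - (μ (B ∩ G z)).toReal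
          + (μ (O ∩ Tᶜ ∩ G z)).toReal + (μ (Oᶜ ∩ T ∩ G z)).toReal) :=
        Summable.tsum_le_tsum (fun z => (min_le_right _ _).trans
          ((min_le_right _ _).trans (min_le_right _ _))) smin s4
      _ = _ := by
        rw [Summable.tsum_add (((hsumm A).sub (hsumm B)).add (hsumm (O ∩ Tᶜ))) (hsumm (Oᶜ ∩ T)),
          Summable.tsum_add ((hsumm A).sub (hsumm B)) (hsumm (O ∩ Tᶜ)),
          Summable.tsum_sub (hsumm A) (hsumm B),
          key' A hA, key' B hB, key' (O ∩ Tᶜ) (hO.inter hT.compl),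
          key' (Oᶜ ∩ T) (hO.compl.inter hT)]
end

section
/- (Theorem 1.) Let (Ω, 𝓕, μ) be a probability space with measurable events A, B, T, O satisfying the consistency identities O ∩ T = A ∩ T and O ∩ Tᶜ = B ∩ Tᶜ, let (G_z)_{z ∈ ι} be a countable measurable partition of Ω, and let β, γ, θ, δ be real numbers. Define f = β·μ(A ∩ Bᶜ) + γ·μ(A ∩ B) + θ·μ(Aᶜ ∩ Bᶜ) + δ·μ(Aᶜ ∩ B), σ = β − γ − θ + δ, W = (γ − δ)·μ(A) + δ·μ(B) + θ·μ(Bᶜ), L = Σ_{z ∈ ι} max{0, μ(A ∩ G_z) − μ(B ∩ G_z), μ(O ∩ G_z) − μ(B ∩ G_z), μ(A ∩ G_z) − μ(O ∩ G_z)}, and U = Σ_{z ∈ ι} min{μ(A ∩ G_z), μ(Bᶜ ∩ G_z), μ(O ∩ T ∩ G_z) + μ(Oᶜ ∩ Tᶜ ∩ G_z), μ(A ∩ G_z) − μ(B ∩ G_z) + μ(O ∩ Tᶜ ∩ G_z) + μ(Oᶜ ∩ T ∩ G_z)}. Then: if σ > 0 then W + σ·L ≤ f ≤ W + σ·U, and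 if σ < 0 then W + σ·U ≤ f ≤ W + σ·L. -/
open MeasureTheory Set

/-- Theorem 1: bounds on the benefit function via a countable measurable
partition given by non-descendant covariates. -/
theorem benefit_bounds_covariates {Ω : Type*} [MeasurableSpace Ω] (μ : Measure Ω)
    [IsProbabilityMeasure μ] {A B T O : Set Ω}
    (hA : MeasurableSet A) (hB : MeasurableSet B)
    (hT : MeasurableSet T) (hO : MeasurableSet O)
    (hcons1 : O ∩ T = A ∩ T) (hcons2 : O ∩ Tᶜ = B ∩ Tᶜ)
    {ι : Type*} [Countable ι] (G : ι → Set Ω)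
    (hG : ∀ z, MeasurableSet (G z))
    (hGdisj : Pairwise (Function.onFun Disjoint G))
    (hGcover : ⋃ z, G z = univ)
    (β γ θ δ : ℝ) (f σ W L U : ℝ)
    (hf : f = β * (μ (A ∩ Bᶜ)).toReal + γ * (μ (A ∩ B)).toReal
        + θ * (μ (Aᶜ ∩ Bᶜ)).toReal + δ * (μ (Aᶜ ∩ B)).toReal)
    (hσ : σ = β - γ - θ + δ)
    (hW : W = (γ - δ) * (μ A).toReal + δ * (μ B).toReal + θ * (μ Bᶜ).toReal)
    (hL : L = ∑' z, max 0 (max ((μ (A ∩ G z)).toReal - (μ (B ∩ G z)).toReal)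
        (max ((μ (O ∩ G z)).toReal - (μ (B ∩ G z)).toReal)
          ((μ (A ∩ G z)).toReal - (μ (O ∩ G z)).toReal))))
    (hU : U = ∑' z, min ((μ (A ∩ G z)).toReal) (min ((μ (Bᶜ ∩ G z)).toReal)
        (min ((μ (O ∩ T ∩ G z)).toReal + (μ (Oᶜ ∩ Tᶜ ∩ G z)).toReal)
          ((μ (A ∩ G z)).toReal - (μ (B ∩ G z)).toReal
            + (μ (O ∩ Tᶜ ∩ G z)).toReal + (μ (Oᶜ ∩ T ∩ G z)).toReal)))) :
    (0 < σ → W + σ * L ≤ f ∧ f ≤ W + σ * U) ∧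
      (σ < 0 → W + σ * U ≤ f ∧ f ≤ W + σ * L) := by
  -- real-measure helper lemmas
  have rmono : ∀ s t : Set Ω, s ⊆ t → (μ s).toReal ≤ (μ t).toReal := fun s t h =>
    ENNReal.toReal_mono (measure_ne_top μ t) (measure_mono h)
  have rsub : ∀ s t u : Set Ω, s ⊆ t ∪ u →
      (μ s).toReal ≤ (μ t).toReal + (μ u).toReal := by
    intro s t u h
    have h1 : μ s ≤ μ t + μ u := (measure_mono h).trans (measure_union_le t u)
    calc (μ s).toReal ≤ (μ t + μ u).toReal :=
          ENNReal.toReal_mono (ENNReal.add_ne_top.2 ⟨measure_ne_top μ t, measure_ne_top μ u⟩) h1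
      _ = (μ t).toReal + (μ u).toReal :=
          ENNReal.toReal_add (measure_ne_top μ t) (measure_ne_top μ u)
  have rsplit : ∀ s t : Set Ω, MeasurableSet t →
      (μ s).toReal = (μ (s ∩ t)).toReal + (μ (s ∩ tᶜ)).toReal := by
    intro s t ht
    have h1 : μ (s ∩ t) + μ (s \ t) = μ s := measure_inter_add_diff s ht
    rw [diff_eq] at h1
    rw [← h1, ENNReal.toReal_add (measure_ne_top μ _) (measure_ne_top μ _)]
  -- consequences of consistency
  have hO_eq : O = (A ∩ T) ∪ (B ∩ Tᶜ) := by
    have h1 : O = (O ∩ T) ∪ (O ∩ Tᶜ) := by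
      rw [← inter_union_distrib_left, union_compl_self, inter_univ]
    rw [h1, hcons1, hcons2]
  have hOc1 : Oᶜ ∩ T = Aᶜ ∩ T := by
    ext x
    have h := Set.ext_iff.mp hcons1 x
    simp only [mem_inter_iff, mem_compl_iff] at *
    tauto
  have hOc2 : Oᶜ ∩ Tᶜ = Bᶜ ∩ Tᶜ := by
    ext x
    have h := Set.ext_iff.mp hcons2 x
    simp only [mem_inter_iff, mem_compl_iff] at *
    tauto
  -- partition decomposition
  have hGdisj' : ∀ s : Set Ω, Pairwise (Function.onFun Disjoint fun z => s ∩ G z) := by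
    intro s i j hij
    exact (hGdisj hij).mono inter_subset_right inter_subset_right
  have htop : ∀ s : Set Ω, ∑' z, μ (s ∩ G z) ≠ ⊤ := by
    intro s
    have h2 : ∑' z, μ (s ∩ G z) ≤ ∑' z, μ (G z) :=
      ENNReal.tsum_le_tsum fun z => measure_mono inter_subset_right
    have h3 : ∑' z, μ (G z) = μ univ := by
      rw [← hGcover]; exact (measure_iUnion hGdisj hG).symm
    rw [h3] at h2
    exact ne_top_of_le_ne_top (measure_ne_top μ _) h2
  have hsummable : ∀ s : Set Ω, Summable fun z => (μ (s ∩ G z)).toReal := fun s =>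
    ENNReal.summable_toReal (htop s)
  have hsum : ∀ s : Set Ω, MeasurableSet s →
      (μ s).toReal = ∑' z, (μ (s ∩ G z)).toReal := by
    intro s hs
    have h1 : μ s = ∑' z, μ (s ∩ G z) := by
      rw [← measure_iUnion (hGdisj' s) (fun z => hs.inter (hG z)),
        ← inter_iUnion, hGcover, inter_univ]
    rw [h1, ENNReal.tsum_toReal_eq (fun z => measure_ne_top μ _)]
  -- per-z bounds
  have perL : ∀ z, max 0 (max ((μ (A ∩ G z)).toReal - (μ (B ∩ G z)).toReal)
      (max ((μ (O ∩ G z)).toReal - (μ (B ∩ G z)).toReal)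
        ((μ (A ∩ G z)).toReal - (μ (O ∩ G z)).toReal)))
      ≤ (μ (A ∩ Bᶜ ∩ G z)).toReal := by
    intro z
    have s1 : A ∩ G z ⊆ (B ∩ G z) ∪ (A ∩ Bᶜ ∩ G z) := by
      intro x; simp only [mem_union, mem_inter_iff, mem_compl_iff]; tauto
    have s2 : O ∩ G z ⊆ (B ∩ G z) ∪ (A ∩ Bᶜ ∩ G z) := by
      intro x; simp only [hO_eq, mem_union, mem_inter_iff, mem_compl_iff]; tauto
    have s3 : A ∩ G z ⊆ (O ∩ G z) ∪ (A ∩ Bᶜ ∩ G z) := by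
      intro x; simp only [hO_eq, mem_union, mem_inter_iff, mem_compl_iff]; tauto
    have h1 := rsub _ _ _ s1
    have h2 := rsub _ _ _ s2
    have h3 := rsub _ _ _ s3
    apply max_le ENNReal.toReal_nonneg
    apply max_le (by linarith)
    exact max_le (by linarith) (by linarith)
  have perU : ∀ z, (μ (A ∩ Bᶜ ∩ G z)).toReal
      ≤ min ((μ (A ∩ G z)).toReal) (min ((μ (Bᶜ ∩ G z)).toReal)
        (min ((μ (O ∩ T ∩ G z)).toReal + (μ (Oᶜ ∩ Tᶜ ∩ G z)).toReal)
          ((μ (A ∩ G z)).toReal - (μ (B ∩ G z)).toReal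
            + (μ (O ∩ Tᶜ ∩ G z)).toReal + (μ (Oᶜ ∩ T ∩ G z)).toReal))) := by
    intro z
    refine le_min ?_ (le_min ?_ (le_min ?_ ?_))
    · exact rmono _ _ (by intro x; simp only [mem_inter_iff, mem_compl_iff]; tauto)
    · exact rmono _ _ (by intro x; simp only [mem_inter_iff, mem_compl_iff]; tauto)
    · rw [hcons1, hOc2]
      apply rsub
      intro x; simp only [mem_union, mem_inter_iff, mem_compl_iff]; tauto
    · rw [hcons2, hOc1]
      have h1 : (μ (A ∩ G z)).toReal
          = (μ (A ∩ G z ∩ B)).toReal + (μ (A ∩ G z ∩ Bᶜ)).toReal := rsplit _ _ hB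
      have he : A ∩ G z ∩ Bᶜ = A ∩ Bᶜ ∩ G z := by
        ext x; simp only [mem_inter_iff, mem_compl_iff]; tauto
      rw [he] at h1
      have s4 : B ∩ G z ⊆ (A ∩ G z ∩ B) ∪ ((B ∩ Tᶜ ∩ G z) ∪ (Aᶜ ∩ T ∩ G z)) := by
        intro x; simp only [mem_union, mem_inter_iff, mem_compl_iff]; tauto
      have h2 := rsub _ _ _ s4
      have h3 := rsub _ _ _ (subset_refl ((B ∩ Tᶜ ∩ G z) ∪ (Aᶜ ∩ T ∩ G z)))
      linarith
  -- global bounds on μ(A ∩ Bᶜ)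
  have hLp : L ≤ (μ (A ∩ Bᶜ)).toReal := by
    rw [hL, hsum (A ∩ Bᶜ) (hA.inter hB.compl)]
    refine Summable.tsum_le_tsum perL ?_ (hsummable _)
    exact Summable.of_nonneg_of_le (fun z => le_max_left 0 _) perL (hsummable _)
  have hpU : (μ (A ∩ Bᶜ)).toReal ≤ U := by
    rw [hU, hsum (A ∩ Bᶜ) (hA.inter hB.compl)]
    refine Summable.tsum_le_tsum perU (hsummable _) ?_
    refine Summable.of_nonneg_of_le (fun z => le_trans ENNReal.toReal_nonneg (perU z))
      (fun z => min_le_left _ _) (hsummable A)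
  -- f = W + σ * μ(A ∩ Bᶜ)
  have h1 : (μ A).toReal = (μ (A ∩ B)).toReal + (μ (A ∩ Bᶜ)).toReal := rsplit A B hB
  have h2 : (μ B).toReal = (μ (A ∩ B)).toReal + (μ (Aᶜ ∩ B)).toReal := by
    have := rsplit B A hA
    rw [inter_comm B A, inter_comm B Aᶜ] at this
    exact this
  have h3 : (μ Bᶜ).toReal = (μ (A ∩ Bᶜ)).toReal + (μ (Aᶜ ∩ Bᶜ)).toReal := by
    have := rsplit Bᶜ A hA
    rw [inter_comm Bᶜ A, inter_comm Bᶜ Aᶜ] at this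
    exact this
  have hfW : f = W + σ * (μ (A ∩ Bᶜ)).toReal := by
    rw [hf, hW, hσ, h1, h2, h3]; ring
  constructor
  · intro hpos
    constructor
    · have := mul_le_mul_of_nonneg_left hLp hpos.le
      linarith
    · have := mul_le_mul_of_nonneg_left hpU hpos.le
      linarith
  · intro hneg
    constructor
    · have := mul_le_mul_of_nonpos_left hpU hneg.le
      linarith
    · have := mul_le_mul_of_nonpos_left hLp hneg.le
      linarith
end

section
/- Let (Ω, 𝓕, μ) be a probability space, A and B measurable events, and β, γ, θ, δ real numbers with β − γ − θ + δ = 0 (the Gain Equality). Then the benefit function f = β·μ(A ∩ Bᶜ) + γ·μ(A ∩ B) + θ·μ(Aᶜ ∩ Bᶜ) + δ·μ(Aᶜ ∩ B) is point-identified: f = (γ − δ)·μ(A) + δ·μ(B) + θ·μ(Bᶜ). -/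
open MeasureTheory Set

/-- Under the Gain Equality `β − γ − θ + δ = 0`, the benefit function is
point-identified. -/
theorem benefit_point_identified {Ω : Type*} [MeasurableSpace Ω] (μ : Measure Ω)
    [IsProbabilityMeasure μ] {A B : Set Ω}
    (hA : MeasurableSet A) (hB : MeasurableSet B)
    (β γ θ δ : ℝ) (hGain : β - γ - θ + δ = 0) :
    β * (μ (A ∩ Bᶜ)).toReal + γ * (μ (A ∩ B)).toReal
      + θ * (μ (Aᶜ ∩ Bᶜ)).toReal + δ * (μ (Aᶜ ∩ B)).toReal
    = (γ - δ) * (μ A).toReal + δ * (μ B).toReal + θ * (μ Bᶜ).toReal := by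
  have fin : ∀ s : Set Ω, μ s ≠ ⊤ := fun s => measure_ne_top μ s
  have h1 : (μ A).toReal = (μ (A ∩ B)).toReal + (μ (A ∩ Bᶜ)).toReal := by
    rw [← ENNReal.toReal_add (fin _) (fin _), ← measure_inter_add_diff A hB,
      Set.diff_eq]
  have h2 : (μ B).toReal = (μ (A ∩ B)).toReal + (μ (Aᶜ ∩ B)).toReal := by
    rw [← ENNReal.toReal_add (fin _) (fin _), ← measure_inter_add_diff B hA,
      Set.diff_eq, Set.inter_comm B A, Set.inter_comm B Aᶜ]
  have h3 : (μ Bᶜ).toReal = (μ (A ∩ Bᶜ)).toReal + (μ (Aᶜ ∩ Bᶜ)).toReal := by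
    rw [← ENNReal.toReal_add (fin _) (fin _), ← measure_inter_add_diff Bᶜ hA,
      Set.diff_eq, Set.inter_comm Bᶜ A, Set.inter_comm Bᶜ Aᶜ]
  have hβ : β = γ + θ - δ := by linarith
  rw [h1, h2, h3, hβ]; ring
end

section
/- Let (Ω, 𝓕, μ) be a probability space, A and B measurable events, and let (E_z)_{z ∈ ι} and (F_w)_{w ∈ κ} be two countable measurable partitions of Ω. Then μ(A ∩ Bᶜ) ≤ Σ_{z ∈ ι} Σ_{w ∈ κ} min{μ(A | E_z ∩ F_w), μ(Bᶜ | E_z ∩ F_w)} · min{μ(E_z), μ(F_w)}, where μ(· | S) denotes conditional probability given S (taken to be 0 when μ(S) = 0). -/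
open MeasureTheory Set

/-- Conditional probability `μ(A | S) = μ(A ∩ S) / μ(S)`, equal to `0` when
`μ(S) = 0`. -/
noncomputable def condProb {Ω : Type*} [MeasurableSpace Ω] (μ : Measure Ω)
    (A S : Set Ω) : ENNReal :=
  μ (A ∩ S) / μ S

lemma condProb_mul_le {Ω : Type*} [MeasurableSpace Ω] (μ : Measure Ω)
    [IsProbabilityMeasure μ] (A S : Set Ω) :
    μ (A ∩ S) ≤ condProb μ A S * μ S := by
  by_cases h : μ S = 0
  · have : μ (A ∩ S) = 0 := le_antisymm (h ▸ measure_mono inter_subset_right) bot_le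
    simp [this]
  · rw [condProb, ENNReal.div_mul_cancel h (measure_ne_top μ S)]

/-- Double-partition upper bound on the PNS `μ(A ∩ Bᶜ)`. -/
theorem pns_upper_bound_two_partitions {Ω : Type*} [MeasurableSpace Ω]
    (μ : Measure Ω) [IsProbabilityMeasure μ] {A B : Set Ω}
    (hA : MeasurableSet A) (hB : MeasurableSet B)
    {ι κ : Type*} [Countable ι] [Countable κ]
    (E : ι → Set Ω) (F : κ → Set Ω)
    (hE : ∀ z, MeasurableSet (E z)) (hF : ∀ w, MeasurableSet (F w))
    (hEdisj : Pairwise (Function.onFun Disjoint E)) (hFdisj : Pairwise (Function.onFun Disjoint F))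
    (hEcover : ⋃ z, E z = univ) (hFcover : ⋃ w, F w = univ) :
    μ (A ∩ Bᶜ) ≤ ∑' z, ∑' w,
      min (condProb μ A (E z ∩ F w)) (condProb μ Bᶜ (E z ∩ F w))
        * min (μ (E z)) (μ (F w)) := by
  have hcell : ∀ z w, μ (A ∩ Bᶜ ∩ (E z ∩ F w)) ≤
      min (condProb μ A (E z ∩ F w)) (condProb μ Bᶜ (E z ∩ F w))
        * min (μ (E z)) (μ (F w)) := by
    intro z w
    set C := E z ∩ F w with hC
    have hmin : μ C ≤ min (μ (E z)) (μ (F w)) :=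
      le_min (measure_mono inter_subset_left) (measure_mono inter_subset_right)
    have key : μ (A ∩ Bᶜ ∩ C) ≤
        min (condProb μ A C) (condProb μ Bᶜ C) * μ C := by
      rcases le_total (condProb μ A C) (condProb μ Bᶜ C) with h | h
      · rw [min_eq_left h]
        calc μ (A ∩ Bᶜ ∩ C) ≤ μ (A ∩ C) := by
              apply measure_mono; intro x hx; exact ⟨hx.1.1, hx.2⟩
          _ ≤ condProb μ A C * μ C := condProb_mul_le μ A C
      · rw [min_eq_right h]
        calc μ (A ∩ Bᶜ ∩ C) ≤ μ (Bᶜ ∩ C) := by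
              apply measure_mono; intro x hx; exact ⟨hx.1.2, hx.2⟩
          _ ≤ condProb μ Bᶜ C * μ C := condProb_mul_le μ Bᶜ C
    exact key.trans (mul_le_mul_right hmin _)
  have hcover : A ∩ Bᶜ ⊆ ⋃ z, ⋃ w, A ∩ Bᶜ ∩ (E z ∩ F w) := by
    intro x hx
    have hz : x ∈ ⋃ z, E z := hEcover ▸ mem_univ x
    have hw : x ∈ ⋃ w, F w := hFcover ▸ mem_univ x
    obtain ⟨z, hz⟩ := mem_iUnion.1 hz
    obtain ⟨w, hw⟩ := mem_iUnion.1 hw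
    exact mem_iUnion.2 ⟨z, mem_iUnion.2 ⟨w, hx, hz, hw⟩⟩
  calc μ (A ∩ Bᶜ) ≤ μ (⋃ z, ⋃ w, A ∩ Bᶜ ∩ (E z ∩ F w)) := measure_mono hcover
    _ ≤ ∑' z, μ (⋃ w, A ∩ Bᶜ ∩ (E z ∩ F w)) := measure_iUnion_le _
    _ ≤ ∑' z, ∑' w, μ (A ∩ Bᶜ ∩ (E z ∩ F w)) :=
        ENNReal.tsum_le_tsum fun z => measure_iUnion_le _
    _ ≤ _ := ENNReal.tsum_le_tsum fun z => ENNReal.tsum_le_tsum fun w => hcell z w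
end

section
/- (Li-Pearl Theorem, equivalent form.) Let (Ω, 𝓕, μ) be a probability space with measurable events A, B, T, O satisfying the consistency identities O ∩ T = A ∩ T and O ∩ Tᶜ = B ∩ Tᶜ, and let β, γ, θ, δ be real numbers. Define f = β·μ(A ∩ Bᶜ) + γ·μ(A ∩ B) + θ·μ(Aᶜ ∩ Bᶜ) + δ·μ(Aᶜ ∩ B), σ = β − γ − θ + δ, W = (γ − δ)·μ(A) + δ·μ(B) + θ·μ(Bᶜ), L = max{0, μ(A) − μ(B), μ(O) − μ(B), μ(A) − μ(O)}, and U = min{μ(A), μ(Bᶜ), μ(O ∩ T) + μ(Oᶜ ∩ Tᶜ), μ(A) − μ(B) + μ(O ∩ Tᶜ) + μ(Oᶜ ∩ T)}. Then: if σ > 0 then W + σ·L ≤ f ≤ W + σ·U, and if σ < 0 then W + σ·U ≤ f ≤ W + σ·L. -/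
open MeasureTheory Set

private lemma measure_split {Ω : Type*} [MeasurableSpace Ω] (μ : Measure Ω)
    [IsFiniteMeasure μ] (s t : Set Ω) (ht : MeasurableSet t) :
    (μ s).toReal = (μ (s ∩ t)).toReal + (μ (s ∩ tᶜ)).toReal := by
  rw [← ENNReal.toReal_add (measure_ne_top μ _) (measure_ne_top μ _)]
  congr 1
  rw [← diff_eq]
  exact (measure_inter_add_diff s ht).symm

/-- Li–Pearl Theorem (equivalent form): bounds on the benefit function from
experimental and observational data. -/
theorem benefit_bounds_li_pearl {Ω : Type*} [MeasurableSpace Ω] (μ : Measure Ω)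
    [IsProbabilityMeasure μ] {A B T O : Set Ω}
    (hA : MeasurableSet A) (hB : MeasurableSet B)
    (hT : MeasurableSet T) (hO : MeasurableSet O)
    (hcons1 : O ∩ T = A ∩ T) (hcons2 : O ∩ Tᶜ = B ∩ Tᶜ)
    (β γ θ δ : ℝ) (f σ W L U : ℝ)
    (hf : f = β * (μ (A ∩ Bᶜ)).toReal + γ * (μ (A ∩ B)).toReal
        + θ * (μ (Aᶜ ∩ Bᶜ)).toReal + δ * (μ (Aᶜ ∩ B)).toReal)
    (hσ : σ = β - γ - θ + δ)
    (hW : W = (γ - δ) * (μ A).toReal + δ * (μ B).toReal + θ * (μ Bᶜ).toReal)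
    (hL : L = max 0 (max ((μ A).toReal - (μ B).toReal)
        (max ((μ O).toReal - (μ B).toReal) ((μ A).toReal - (μ O).toReal))))
    (hU : U = min ((μ A).toReal) (min ((μ Bᶜ).toReal)
        (min ((μ (O ∩ T)).toReal + (μ (Oᶜ ∩ Tᶜ)).toReal)
          ((μ A).toReal - (μ B).toReal + (μ (O ∩ Tᶜ)).toReal + (μ (Oᶜ ∩ T)).toReal)))) :
    (0 < σ → W + σ * L ≤ f ∧ f ≤ W + σ * U) ∧
      (σ < 0 → W + σ * U ≤ f ∧ f ≤ W + σ * L) := by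
  -- complement consistency identities
  have hcons3 : Oᶜ ∩ T = Aᶜ ∩ T := by
    ext x
    have h := Set.ext_iff.mp hcons1 x
    simp only [mem_inter_iff, mem_compl_iff] at *
    tauto
  have hcons4 : Oᶜ ∩ Tᶜ = Bᶜ ∩ Tᶜ := by
    ext x
    have h := Set.ext_iff.mp hcons2 x
    simp only [mem_inter_iff, mem_compl_iff] at *
    tauto
  -- the eight atoms
  set a1 := (μ (A ∩ B ∩ T)).toReal with ha1
  set a2 := (μ (A ∩ B ∩ Tᶜ)).toReal with ha2
  set a3 := (μ (A ∩ Bᶜ ∩ T)).toReal with ha3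
  set a4 := (μ (A ∩ Bᶜ ∩ Tᶜ)).toReal with ha4
  set a5 := (μ (Aᶜ ∩ B ∩ T)).toReal with ha5
  set a6 := (μ (Aᶜ ∩ B ∩ Tᶜ)).toReal with ha6
  set a7 := (μ (Aᶜ ∩ Bᶜ ∩ T)).toReal with ha7
  set a8 := (μ (Aᶜ ∩ Bᶜ ∩ Tᶜ)).toReal with ha8
  have n1 : 0 ≤ a1 := ENNReal.toReal_nonneg
  have n2 : 0 ≤ a2 := ENNReal.toReal_nonneg
  have n3 : 0 ≤ a3 := ENNReal.toReal_nonneg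
  have n4 : 0 ≤ a4 := ENNReal.toReal_nonneg
  have n5 : 0 ≤ a5 := ENNReal.toReal_nonneg
  have n6 : 0 ≤ a6 := ENNReal.toReal_nonneg
  have n7 : 0 ≤ a7 := ENNReal.toReal_nonneg
  have n8 : 0 ≤ a8 := ENNReal.toReal_nonneg
  -- splitting identities
  have eAB : (μ (A ∩ B)).toReal = a1 + a2 := measure_split μ (A ∩ B) T hT
  have eABc : (μ (A ∩ Bᶜ)).toReal = a3 + a4 := measure_split μ (A ∩ Bᶜ) T hT
  have eAcB : (μ (Aᶜ ∩ B)).toReal = a5 + a6 := measure_split μ (Aᶜ ∩ B) T hT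
  have eAcBc : (μ (Aᶜ ∩ Bᶜ)).toReal = a7 + a8 := measure_split μ (Aᶜ ∩ Bᶜ) T hT
  have eA : (μ A).toReal = a1 + a2 + (a3 + a4) := by
    rw [measure_split μ A B hB, eAB, eABc]
  have eB : (μ B).toReal = a1 + a5 + (a2 + a6) := by
    rw [measure_split μ B T hT, measure_split μ (B ∩ T) A hA,
      measure_split μ (B ∩ Tᶜ) A hA,
      show B ∩ T ∩ A = A ∩ B ∩ T from by ext x; simp only [mem_inter_iff, mem_compl_iff]; tauto,
      show B ∩ T ∩ Aᶜ = Aᶜ ∩ B ∩ T from by ext x; simp only [mem_inter_iff, mem_compl_iff]; tauto,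
      show B ∩ Tᶜ ∩ A = A ∩ B ∩ Tᶜ from by ext x; simp only [mem_inter_iff, mem_compl_iff]; tauto,
      show B ∩ Tᶜ ∩ Aᶜ = Aᶜ ∩ B ∩ Tᶜ from by ext x; simp only [mem_inter_iff, mem_compl_iff]; tauto]
  have eBc : (μ Bᶜ).toReal = a3 + a7 + (a4 + a8) := by
    rw [measure_split μ Bᶜ T hT, measure_split μ (Bᶜ ∩ T) A hA,
      measure_split μ (Bᶜ ∩ Tᶜ) A hA,
      show Bᶜ ∩ T ∩ A = A ∩ Bᶜ ∩ T from by ext x; simp only [mem_inter_iff, mem_compl_iff]; tauto,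
      show Bᶜ ∩ T ∩ Aᶜ = Aᶜ ∩ Bᶜ ∩ T from by ext x; simp only [mem_inter_iff, mem_compl_iff]; tauto,
      show Bᶜ ∩ Tᶜ ∩ A = A ∩ Bᶜ ∩ Tᶜ from by ext x; simp only [mem_inter_iff, mem_compl_iff]; tauto,
      show Bᶜ ∩ Tᶜ ∩ Aᶜ = Aᶜ ∩ Bᶜ ∩ Tᶜ from by ext x; simp only [mem_inter_iff, mem_compl_iff]; tauto]
  have eOT : (μ (O ∩ T)).toReal = a1 + a3 := by
    rw [hcons1, measure_split μ (A ∩ T) B hB,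
      show A ∩ T ∩ B = A ∩ B ∩ T from by ext x; simp only [mem_inter_iff, mem_compl_iff]; tauto,
      show A ∩ T ∩ Bᶜ = A ∩ Bᶜ ∩ T from by ext x; simp only [mem_inter_iff, mem_compl_iff]; tauto]
  have eOTc : (μ (O ∩ Tᶜ)).toReal = a2 + a6 := by
    rw [hcons2, measure_split μ (B ∩ Tᶜ) A hA,
      show B ∩ Tᶜ ∩ A = A ∩ B ∩ Tᶜ from by ext x; simp only [mem_inter_iff, mem_compl_iff]; tauto,
      show B ∩ Tᶜ ∩ Aᶜ = Aᶜ ∩ B ∩ Tᶜ from by ext x; simp only [mem_inter_iff, mem_compl_iff]; tauto]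
  have eOcT : (μ (Oᶜ ∩ T)).toReal = a5 + a7 := by
    rw [hcons3, measure_split μ (Aᶜ ∩ T) B hB,
      show Aᶜ ∩ T ∩ B = Aᶜ ∩ B ∩ T from by ext x; simp only [mem_inter_iff, mem_compl_iff]; tauto,
      show Aᶜ ∩ T ∩ Bᶜ = Aᶜ ∩ Bᶜ ∩ T from by ext x; simp only [mem_inter_iff, mem_compl_iff]; tauto]
  have eOcTc : (μ (Oᶜ ∩ Tᶜ)).toReal = a4 + a8 := by
    rw [hcons4, measure_split μ (Bᶜ ∩ Tᶜ) A hA,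
      show Bᶜ ∩ Tᶜ ∩ A = A ∩ Bᶜ ∩ Tᶜ from by ext x; simp only [mem_inter_iff, mem_compl_iff]; tauto,
      show Bᶜ ∩ Tᶜ ∩ Aᶜ = Aᶜ ∩ Bᶜ ∩ Tᶜ from by ext x; simp only [mem_inter_iff, mem_compl_iff]; tauto]
  have eO : (μ O).toReal = a1 + a3 + (a2 + a6) := by
    rw [measure_split μ O T hT, eOT, eOTc]
  -- key identity: f = W + σ * p, with p = a3 + a4
  set p := a3 + a4 with hp
  have hfW : f = W + σ * p := by
    rw [hf, hσ, hW, eAB, eABc, eAcB, eAcBc, eA, eB, eBc]; ring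
  -- L ≤ p ≤ U
  have hLp : L ≤ p := by
    rw [hL, eA, eB, eO]
    apply max_le (by linarith)
    apply max_le (by linarith)
    apply max_le (by linarith) (by linarith)
  have hpU : p ≤ U := by
    rw [hU, eA, eB, eBc, eOT, eOTc, eOcT, eOcTc]
    refine le_min (by linarith) (le_min (by linarith) (le_min (by linarith) (by linarith)))
  refine ⟨fun h => ⟨?_, ?_⟩, fun h => ⟨?_, ?_⟩⟩
  · linarith only [hfW, mul_le_mul_of_nonneg_left hLp h.le]
  · linarith only [hfW, mul_le_mul_of_nonneg_left hpU h.le]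
  · linarith only [hfW, mul_le_mul_of_nonpos_left hpU h.le]
  · linarith only [hfW, mul_le_mul_of_nonpos_left hLp h.le]
end

section
/- (Tian-Pearl general relation between experimental and observational data.) Let (Ω, 𝓕, μ) be a probability space with measurable events A, T, O satisfying the consistency identity O ∩ T = A ∩ T. Then μ(O ∩ T) ≤ μ(A) ≤ 1 − μ(Oᶜ ∩ T); that is, P(x, y) ≤ P(y_x) ≤ 1 − P(x, y'). -/
open MeasureTheory Set

/-- Tian–Pearl general relation: `P(x, y) ≤ P(y_x) ≤ 1 − P(x, y')`. -/
theorem tian_pearl_relation {Ω : Type*} [MeasurableSpace Ω] (μ : Measure Ω)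
    [IsProbabilityMeasure μ] {A T O : Set Ω}
    (hA : MeasurableSet A) (hT : MeasurableSet T) (hO : MeasurableSet O)
    (hcons : O ∩ T = A ∩ T) :
    (μ (O ∩ T)).toReal ≤ (μ A).toReal ∧
      (μ A).toReal ≤ 1 - (μ (Oᶜ ∩ T)).toReal := by
  have hfin : ∀ s : Set Ω, μ s ≠ ⊤ := fun s => measure_ne_top μ s
  constructor
  · rw [hcons]
    exact ENNReal.toReal_mono (hfin A) (measure_mono inter_subset_left)
  · have hdisj : Disjoint A (Oᶜ ∩ T) := by
      rw [disjoint_iff_inter_eq_empty]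
      ext x
      simp only [mem_inter_iff, mem_compl_iff, mem_empty_iff_false, iff_false]
      rintro ⟨hxA, hxO, hxT⟩
      have : x ∈ O ∩ T := hcons ▸ ⟨hxA, hxT⟩
      exact hxO this.1
    have := measure_union (μ := μ) hdisj (hO.compl.inter hT)
    have hle : μ A + μ (Oᶜ ∩ T) ≤ 1 := by
      rw [← this]
      exact prob_le_one
    have := ENNReal.toReal_mono (by norm_num) hle
    rw [ENNReal.toReal_add (hfin A) (hfin _)] at this
    simp at this
    linarith
end
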